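/- Let p be an odd prime with p ∤ a, p ∤ (4ac − b²), p ∤ 8Δ. Then the congruence Q(x,y,z) ≡ 0 (mod p) with p ∤ z has (p−1)(p − χ(b²−4ac)) solutions in (ℤ/pℤ)³; in particular, since p − χ(b²−4ac) ≥ p − 1 ≥ 2, a solution with p ∤ z always exists. -/

import Mathlib

/-!
For fixed `y` and `z ≠ 0`, `Q` is a quadratic in `x` with leading coefficient `a`, so it has
`1 + χ(D)` roots, `D` being its discriminant. As a polynomial in `y`, `D` is a quadratic with
leading coefficient `b² - 4ac` and discriminant `-8aΔz² ≠ 0`, and the character sum of such a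
quadratic is `-χ(b² - 4ac)`; this reduces, by completing the square, to the Jacobi sum
`J(χ, χ) = -χ(-1)`. Hence every `z ≠ 0` contributes `p - χ(b² - 4ac)` solutions.
-/

open Finset

theorem Nat.card_subtype_prod_eq_sum {α β : Type*} [Finite α] [Fintype β] (P : α × β → Prop) :
    Nat.card {v // P v} = ∑ w : β, Nat.card {x // P (x, w)} := by
  rw [← Nat.card_sigma]
  exact Nat.card_congr
    { toFun v := ⟨v.1.2, v.1.1, v.2⟩, invFun s := ⟨(s.2.1, s.1), s.2.2⟩,
      left_inv _ := rfl, right_inv _ := rfl }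

section

variable {F : Type*} [Field F] [Fintype F] [DecidableEq F]

theorem card_quadratic_eq_zero (hF : ringChar F ≠ 2) {a : F} (ha : a ≠ 0) (b c : F) :
    (Nat.card {x : F // a * x ^ 2 + b * x + c = 0} : ℤ) = quadraticChar F (discrim a b c) + 1 := by
  have : NeZero (2 : F) := ⟨Ring.two_ne_zero hF⟩
  let e : F ≃ F := (Equiv.mulLeft₀ (2 * a) (mul_ne_zero two_ne_zero ha)).trans (Equiv.addRight b)
  have hroots : Nat.card {x : F // a * x ^ 2 + b * x + c = 0}
      = Nat.card {s : F // s ^ 2 = discrim a b c} :=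
    Nat.card_congr <| e.subtypeEquiv fun x => by
      simp [e, sq, quadratic_eq_zero_iff_discrim_eq_sq ha, eq_comm]
  rw [hroots, ← quadraticChar_card_sqrts hF, Set.toFinset_card, Nat.card_eq_fintype_card]
  rfl

theorem sum_quadraticChar_sq_sub (hF : ringChar F ≠ 2) {D : F} (hD : D ≠ 0) :
    ∑ u : F, quadraticChar F (u ^ 2 - D) = -1 := by
  have hfiber : ∑ u : F, quadraticChar F (u ^ 2 - D)
      = ∑ t : F, (quadraticChar F t + 1) * quadraticChar F (t - D) := by
    simp_rw [← quadraticChar_card_sqrts hF, Set.toFinset_ofPred, card_filter, Nat.cast_sum,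
      sum_mul]
    rw [sum_comm]
    simp
  have hshift : ∑ t : F, quadraticChar F (t - D) = 0 := by
    rw [← quadraticChar_sum_zero hF]
    exact Fintype.sum_equiv (Equiv.subRight D) _ _ fun _ => rfl
  -- substitute `t = D * s`
  have hjacobi : ∑ t : F, quadraticChar F t * quadraticChar F (t - D)
      = quadraticChar F (-1) * jacobiSum (quadraticChar F) (quadraticChar F)⁻¹ := by
    rw [(quadraticChar_isQuadratic F).inv, jacobiSum, mul_sum]
    refine (Fintype.sum_equiv (Equiv.mulLeft₀ D hD) _ _ fun s => ?_).symm
    have hsq : quadraticChar F D * quadraticChar F D = 1 := by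
      rw [← sq, quadraticChar_sq_one hD]
    calc quadraticChar F (-1) * (quadraticChar F s * quadraticChar F (1 - s))
        = quadraticChar F D * quadraticChar F D *
            (quadraticChar F s * quadraticChar F (-1 * (1 - s))) := by rw [hsq, map_mul]; ring
      _ = quadraticChar F (D * s) * quadraticChar F (D * s - D) := by
        simp only [← map_mul]; congr 1; ring
  rw [hfiber]
  simp_rw [add_mul, one_mul]
  rw [sum_add_distrib, hshift, hjacobi, jacobiSum_nontrivial_inv (quadraticChar_ne_one hF),
    add_zero, mul_neg, ← sq, quadraticChar_sq_one (neg_ne_zero.2 one_ne_zero)]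

theorem sum_quadraticChar_quadratic (hF : ringChar F ≠ 2) {a : F} (ha : a ≠ 0)
    {b c : F} (hdisc : discrim a b c ≠ 0) :
    ∑ x : F, quadraticChar F (a * x ^ 2 + b * x + c) = -quadraticChar F a := by
  have h2 : (2 : F) ≠ 0 := Ring.two_ne_zero hF
  have hχ4a : quadraticChar F (4 * a) = quadraticChar F a := by
    rw [show (4 : F) * a = 2 ^ 2 * a by ring, map_mul, quadraticChar_sq_one' h2, one_mul]
  -- `4a (a x² + b x + c) = (2ax + b)² - discrim a b c`
  have hcomplete : quadraticChar F a * ∑ x : F, quadraticChar F (a * x ^ 2 + b * x + c) = -1 := by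
    rw [← hχ4a, mul_sum, ← sum_quadraticChar_sq_sub hF hdisc]
    refine Fintype.sum_bijective (fun x => 2 * a * x + b) ((Equiv.mulLeft₀ (2 * a)
      (mul_ne_zero h2 ha)).trans (Equiv.addRight b)).bijective _ _ fun x => ?_
    rw [← map_mul, discrim]
    ring_nf
  have hsq : quadraticChar F a * quadraticChar F a = 1 := by rw [← sq, quadraticChar_sq_one ha]
  linear_combination quadraticChar F a * hcomplete
    - (∑ x : F, quadraticChar F (a * x ^ 2 + b * x + c)) * hsq

theorem sum_card_ternary_zeros_of_z_ne_zero (hF : ringChar F ≠ 2) {a b c d e f z : F}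
    (ha : a ≠ 0) (hdisc : discrim a b c ≠ 0)
    (hΔ : 8*a*c*f + 2*b*d*e - 2*a*e^2 - 2*c*d^2 - 2*f*b^2 ≠ 0) (hz : z ≠ 0) :
    ∑ y : F, (Nat.card {x : F // a*x^2 + b*x*y + c*y^2 + d*x*z + e*y*z + f*z^2 = 0} : ℤ)
      = Fintype.card F - quadraticChar F (discrim a b c) := by
  have hx (y : F) : (Nat.card {x : F // a*x^2 + b*x*y + c*y^2 + d*x*z + e*y*z + f*z^2 = 0} : ℤ)
      = quadraticChar F (discrim a b c * y ^ 2 + (2*b*d - 4*a*e) * z * y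
          + (d^2 - 4*a*f) * z^2) + 1 := by
    calc _ = (Nat.card {x : F // a*x^2 + (b*y + d*z)*x + (c*y^2 + e*y*z + f*z^2) = 0} : ℤ) :=
          congrArg _ (Nat.card_congr (Equiv.subtypeEquivRight fun x => by ring_nf))
      _ = _ := by rw [card_quadratic_eq_zero hF ha, discrim, discrim]; congr 2; ring
  have hdisc' : discrim (discrim a b c) ((2*b*d - 4*a*e) * z) ((d^2 - 4*a*f) * z^2) ≠ 0 := by
    rw [show discrim (discrim a b c) ((2*b*d - 4*a*e) * z) ((d^2 - 4*a*f) * z^2)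
        = -(2 ^ 3 * a * (8*a*c*f + 2*b*d*e - 2*a*e^2 - 2*c*d^2 - 2*f*b^2) * z ^ 2) by
      simp only [discrim]; ring]
    have h2 : (2 : F) ≠ 0 := Ring.two_ne_zero hF
    simp [h2, ha, hΔ, hz]
  simp_rw [hx, sum_add_distrib, sum_quadraticChar_quadratic hF hdisc hdisc', sum_const, card_univ]
  simp only [Int.nsmul_eq_mul, mul_one]
  ring

theorem card_ternary_zeros_z_ne_zero (hF : ringChar F ≠ 2) {a b c d e f : F}
    (ha : a ≠ 0) (hdisc : discrim a b c ≠ 0)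
    (hΔ : 8*a*c*f + 2*b*d*e - 2*a*e^2 - 2*c*d^2 - 2*f*b^2 ≠ 0) :
    (Nat.card {v : F × F × F // a*v.1^2 + b*v.1*v.2.1 + c*v.2.1^2
        + d*v.1*v.2.2 + e*v.2.1*v.2.2 + f*v.2.2^2 = 0 ∧ v.2.2 ≠ 0} : ℤ)
      = (Fintype.card F - 1) * (Fintype.card F - quadraticChar F (discrim a b c)) := by
  set N : ℤ := Fintype.card F - quadraticChar F (discrim a b c)
  have hfiber (z : F) : ∑ y : F, (Nat.card {x : F //
      a*x^2 + b*x*y + c*y^2 + d*x*z + e*y*z + f*z^2 = 0 ∧ z ≠ 0} : ℤ)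
        = N - if z = 0 then N else 0 := by
    by_cases hz : z = 0
    · simp [hz]
    · simp only [hz, ne_eq, not_false_eq_true, and_true, if_false, sub_zero]
      exact sum_card_ternary_zeros_of_z_ne_zero hF ha hdisc hΔ hz
  rw [Nat.card_subtype_prod_eq_sum, Fintype.sum_prod_type, sum_comm]
  push_cast
  simp_rw [hfiber, sum_sub_distrib, sum_ite_eq', if_pos (mem_univ _), sum_const, card_univ]
  simp only [Int.nsmul_eq_mul]
  ring

end

/-- The congruence `Q(x,y,z) ≡ 0 (mod p)` with `p ∤ z` has
`(p−1)(p − χ(b²−4ac))` solutions in `(ℤ/pℤ)³`; in particular a solution with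
`p ∤ z` always exists. -/
theorem count_and_exists_solutions_ternary_mod_prime
    (p : ℕ) [Fact p.Prime] (hodd : Odd p)
    (a b c d e f : ℤ)
    (ha : ¬ (p : ℤ) ∣ a) (hb : ¬ (p : ℤ) ∣ (4*a*c - b^2))
    (hΔ : ¬ (p : ℤ) ∣ (8*a*c*f + 2*b*d*e - 2*a*e^2 - 2*c*d^2 - 2*f*b^2)) :
    (Nat.card {v : ZMod p × ZMod p × ZMod p //
        (a : ZMod p)*v.1^2 + b*v.1*v.2.1 + c*v.2.1^2
          + d*v.1*v.2.2 + e*v.2.1*v.2.2 + f*v.2.2^2 = 0 ∧ v.2.2 ≠ 0} : ℤ)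
      = ((p : ℤ) - 1) * ((p : ℤ) - legendreSym p (b^2 - 4*a*c)) ∧
    ∃ x y z : ZMod p,
      (a : ZMod p)*x^2 + b*x*y + c*y^2 + d*x*z + e*y*z + f*z^2 = 0 ∧ z ≠ 0 := by
  simp only [← ZMod.intCast_zmod_eq_zero_iff_dvd] at ha hb hΔ
  push_cast at ha hb hΔ
  have hp2 : p ≠ 2 := by rintro rfl; norm_num at hodd
  have hF : ringChar (ZMod p) ≠ 2 := by rwa [ZMod.ringChar_zmod_n]
  have hdisc : discrim (a : ZMod p) b c ≠ 0 := by
    rw [discrim, ← neg_sub]; exact neg_ne_zero.2 hb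
  have hcount := card_ternary_zeros_z_ne_zero hF ha hdisc hΔ
  rw [ZMod.card] at hcount
  have hleg : legendreSym p (b^2 - 4*a*c) = quadraticChar (ZMod p) (discrim (a : ZMod p) b c) := by
    simp [legendreSym, discrim]
  refine ⟨hleg ▸ hcount, ?_⟩
  have hp3 : (3 : ℤ) ≤ p := by have := (Fact.out : p.Prime).two_le; omega
  have hχ : quadraticChar (ZMod p) (discrim (a : ZMod p) b c) ≤ 1 := by
    rcases quadraticChar_dichotomy hdisc with h | h <;> simp [h]
  have hpos : (0 : ℤ) < (p - 1) * (p - quadraticChar (ZMod p) (discrim (a : ZMod p) b c)) := by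
    nlinarith
  rw [← hcount, Nat.cast_pos, Nat.card_pos_iff] at hpos
  obtain ⟨⟨⟨x, y, z⟩, hQ, hz⟩⟩ := hpos.1
  exact ⟨x, y, z, hQ, hz⟩
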